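/- Let n = 5/2, q = 2, k < 0, and let c ∈ ℝ. Fix a sign ε ∈ {1, −1}. Then the function u(t,r) = ε·3(t + c − r²)/(r(3(t+c) + r²)·√(−2k)) is a solution of the semilinear radial heat equation u_t = u_rr + (3/2) r⁻¹ u_r + k u³ on any open subset of {(t,r) : r > 0, 3(t+c) + r² ≠ 0}. -/

import Mathlib

/-!
The solution is `u = λ · w(t + c, r)` with `λ = ε / √(-2k)` and
`w(τ, r) = 3(τ - r²) / (r(3τ + r²)) = 1/r - 4r/(3τ + r²)`. Time translation preserves the
equation and `u ↦ λu` turns the coefficient `k λ²` into `k`; since `k λ² = -1/2`, it remains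
to check that `w` solves the equation with coefficient `-1/2`, a direct computation from the
partial-fraction form of `w`.
-/

noncomputable section

def pdt (u : ℝ × ℝ → ℝ) (p : ℝ × ℝ) : ℝ := deriv (fun s => u (s, p.2)) p.1

def pdr (u : ℝ × ℝ → ℝ) (p : ℝ × ℝ) : ℝ := deriv (fun s => u (p.1, s)) p.2

def pdrr (u : ℝ × ℝ → ℝ) (p : ℝ × ℝ) : ℝ :=
  deriv (fun s => deriv (fun s' => u (p.1, s')) s) p.2

/-- The semilinear radial heat equation for `n = 5/2`, `q = 2`:
`u_t = u_rr + (3/2) r⁻¹ u_r + k u³`. -/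
def HeatEqCubic (k : ℝ) (u : ℝ × ℝ → ℝ) (p : ℝ × ℝ) : Prop :=
  pdt u p = pdrr u p + (3 / 2) * (p.2)⁻¹ * pdr u p + k * u p ^ 3

open Filter Topology

theorem deriv_deriv_eq_of_eventually_hasDerivAt {𝕜 F : Type*} [NontriviallyNormedField 𝕜]
    [NormedAddCommGroup F] [NormedSpace 𝕜 F] {f f' : 𝕜 → F} {x : 𝕜} {f'' : F}
    (hf : ∀ᶠ y in 𝓝 x, HasDerivAt f (f' y) y) (hf' : HasDerivAt f' f'' x) :
    deriv (fun y => deriv f y) x = f'' :=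
  (hf'.congr_of_eventuallyEq (hf.mono fun _ hy => hy.deriv)).deriv

namespace HeatEqCubic

theorem const_mul {k a : ℝ} {u : ℝ × ℝ → ℝ} {p : ℝ × ℝ} (hu : HeatEqCubic (k * a ^ 2) u p) :
    HeatEqCubic k (fun p => a * u p) p := by
  simp only [HeatEqCubic, pdt, pdr, pdrr, deriv_const_mul_field'] at hu ⊢
  linear_combination a * hu

theorem comp_add_fst {k c : ℝ} {u : ℝ × ℝ → ℝ} {p : ℝ × ℝ} (hu : HeatEqCubic k u (p.1 + c, p.2)) :
    HeatEqCubic k (fun p => u (p.1 + c, p.2)) p := by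
  simpa only [HeatEqCubic, pdt, pdr, pdrr, deriv_comp_add_const (fun s => u (s, p.2))] using hu

end HeatEqCubic

def cubicSimilarityProfile (p : ℝ × ℝ) : ℝ := 3 * (p.1 - p.2 ^ 2) / (p.2 * (3 * p.1 + p.2 ^ 2))

def cubicSimilarityProfileDr (τ r : ℝ) : ℝ := -1 / r ^ 2 - 4 * (3 * τ - r ^ 2) / (3 * τ + r ^ 2) ^ 2

section Profile

variable {τ r : ℝ}

theorem cubicSimilarityProfile_eq (hr : r ≠ 0) (hq : 3 * τ + r ^ 2 ≠ 0) :
    cubicSimilarityProfile (τ, r) = 1 / r - 4 * r / (3 * τ + r ^ 2) := by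
  rw [cubicSimilarityProfile]
  field_simp
  ring

theorem eventually_ne_zero_and_ne_zero (hr : r ≠ 0) (hq : 3 * τ + r ^ 2 ≠ 0) :
    ∀ᶠ s in 𝓝 r, s ≠ 0 ∧ 3 * τ + s ^ 2 ≠ 0 :=
  (continuousAt_id.eventually_ne hr).and
    ((by fun_prop : Continuous fun s : ℝ => 3 * τ + s ^ 2).continuousAt.eventually_ne hq)

theorem hasDerivAt_cubicSimilarityProfile_fst (hr : r ≠ 0) (hq : 3 * τ + r ^ 2 ≠ 0) :
    HasDerivAt (fun s => cubicSimilarityProfile (s, r)) (12 * r / (3 * τ + r ^ 2) ^ 2) τ := by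
  have hlin : HasDerivAt (fun s => 3 * s + r ^ 2) 3 τ := by
    simpa using ((hasDerivAt_id τ).const_mul 3).add_const (r ^ 2)
  have hpf := ((hlin.inv hq).const_mul (4 * r)).const_sub (1 / r)
  have hev : (fun s => cubicSimilarityProfile (s, r)) =ᶠ[𝓝 τ]
      fun s => 1 / r - 4 * r * (3 * s + r ^ 2)⁻¹ := by
    filter_upwards [hlin.continuousAt.eventually_ne hq] with s hs
    rw [cubicSimilarityProfile_eq hr hs]
    ring
  refine (hpf.congr_of_eventuallyEq hev).congr_deriv ?_
  field_simp
  ring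

theorem hasDerivAt_cubicSimilarityProfile_snd (hr : r ≠ 0) (hq : 3 * τ + r ^ 2 ≠ 0) :
    HasDerivAt (fun s => cubicSimilarityProfile (τ, s)) (cubicSimilarityProfileDr τ r) r := by
  have hquad : HasDerivAt (fun s => 3 * τ + s ^ 2) (2 * r) r := by
    simpa using (hasDerivAt_pow 2 r).const_add (3 * τ)
  have hpf := ((hasDerivAt_const r (1 : ℝ)).fun_div (hasDerivAt_id' r) hr).sub
    (((hasDerivAt_id' r).const_mul 4).fun_div hquad hq)
  have hev : (fun s => cubicSimilarityProfile (τ, s)) =ᶠ[𝓝 r]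
      fun s => 1 / s - 4 * s / (3 * τ + s ^ 2) := by
    filter_upwards [eventually_ne_zero_and_ne_zero hr hq] with s hs
    exact cubicSimilarityProfile_eq hs.1 hs.2
  refine (hpf.congr_of_eventuallyEq hev).congr_deriv ?_
  rw [cubicSimilarityProfileDr]
  field_simp
  ring

theorem hasDerivAt_cubicSimilarityProfileDr (hr : r ≠ 0) (hq : 3 * τ + r ^ 2 ≠ 0) :
    HasDerivAt (cubicSimilarityProfileDr τ)
      (2 / r ^ 3 + 8 * r * (9 * τ - r ^ 2) / (3 * τ + r ^ 2) ^ 3) r := by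
  have hquad : HasDerivAt (fun s => 3 * τ + s ^ 2) (2 * r) r := by
    simpa using (hasDerivAt_pow 2 r).const_add (3 * τ)
  have hnum : HasDerivAt (fun s => 4 * (3 * τ - s ^ 2)) (4 * (-(2 * r))) r := by
    simpa using ((hasDerivAt_pow 2 r).const_sub (3 * τ)).const_mul 4
  have h := ((hasDerivAt_const r (-1 : ℝ)).fun_div (hasDerivAt_pow 2 r) (pow_ne_zero 2 hr)).sub
    (hnum.fun_div (hquad.fun_pow 2) (pow_ne_zero 2 hq))
  refine h.congr_deriv ?_
  field_simp
  ring

theorem heatEqCubic_cubicSimilarityProfile (hr : r ≠ 0) (hq : 3 * τ + r ^ 2 ≠ 0) :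
    HeatEqCubic (-1 / 2) cubicSimilarityProfile (τ, r) := by
  have hrr : pdrr cubicSimilarityProfile (τ, r)
      = 2 / r ^ 3 + 8 * r * (9 * τ - r ^ 2) / (3 * τ + r ^ 2) ^ 3 :=
    deriv_deriv_eq_of_eventually_hasDerivAt
      ((eventually_ne_zero_and_ne_zero hr hq).mono fun _ hs =>
        hasDerivAt_cubicSimilarityProfile_snd hs.1 hs.2)
      (hasDerivAt_cubicSimilarityProfileDr hr hq)
  rw [HeatEqCubic, hrr, pdt, (hasDerivAt_cubicSimilarityProfile_fst hr hq).deriv, pdr,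
    (hasDerivAt_cubicSimilarityProfile_snd hr hq).deriv, cubicSimilarityProfileDr,
    cubicSimilarityProfile_eq hr hq]
  field_simp
  ring

end Profile

theorem exact_solution_similarity_a_general (k c e : ℝ) (hk : k < 0) (he : e = 1 ∨ e = -1)
    (D : Set (ℝ × ℝ))
    (hDsub : D ⊆ {p : ℝ × ℝ | 0 < p.2 ∧ 3 * (p.1 + c) + p.2 ^ 2 ≠ 0}) :
    ∀ p ∈ D,
      HeatEqCubic k (fun p : ℝ × ℝ =>
        e * (3 * (p.1 + c - p.2 ^ 2))
          / (p.2 * (3 * (p.1 + c) + p.2 ^ 2) * Real.sqrt (-2 * k))) p := by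
  intro p hp
  obtain ⟨hr, hq⟩ := hDsub hp
  set a := e / Real.sqrt (-2 * k)
  have hsqrt : Real.sqrt (-2 * k) ^ 2 = -2 * k := Real.sq_sqrt (by linarith)
  have he2 : e ^ 2 = 1 := by rcases he with rfl | rfl <;> norm_num
  have ha : k * a ^ 2 = -1 / 2 := by
    rw [div_pow, hsqrt, he2]
    field_simp [hk.ne]
  have hu : (fun p : ℝ × ℝ => e * (3 * (p.1 + c - p.2 ^ 2))
      / (p.2 * (3 * (p.1 + c) + p.2 ^ 2) * Real.sqrt (-2 * k)))
      = fun p => a * cubicSimilarityProfile (p.1 + c, p.2) := by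
    funext p
    rw [cubicSimilarityProfile, div_mul_div_comm, mul_comm (Real.sqrt (-2 * k))]
  rw [hu]
  refine HeatEqCubic.const_mul ?_
  rw [ha]
  exact HeatEqCubic.comp_add_fst (heatEqCubic_cubicSimilarityProfile hr.ne' hq)

/-- the similarity exact solution
`u = ε 3(t+c-r²)/(r(3(t+c)+r²)√(-2k))` for `n = 5/2`, `q = 2`, `k < 0`. -/
theorem exact_solution_similarity_a (k c e : ℝ) (hk : k < 0) (he : e = 1 ∨ e = -1)
    (D : Set (ℝ × ℝ)) (hD : IsOpen D)
    (hDsub : D ⊆ {p : ℝ × ℝ | 0 < p.2 ∧ 3 * (p.1 + c) + p.2 ^ 2 ≠ 0}) :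
    ∀ p ∈ D,
      HeatEqCubic k (fun p : ℝ × ℝ =>
        e * (3 * (p.1 + c - p.2 ^ 2))
          / (p.2 * (3 * (p.1 + c) + p.2 ^ 2) * Real.sqrt (-2 * k))) p :=
  exact_solution_similarity_a_general k c e hk he D hDsub
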